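/- For fully random hash functions h₁, h₂ : S → [m] with m = (1+ε)n and |S| = n, the probability that there exists T ⊆ S such that G(T, h₁, h₂) is an excess-(s+1) core graph is O(1/n^{s+1}); the bound follows from the estimate Σ_{t=s+3}^{n} C(n,t) · 2^{s+1} · m^{t-s-1} · t! · t^{O(s)} / m^{2t} = O(1/n^{s+1}). -/

import Mathlib

namespace CuckooStash

variable {V E : Type*} [Fintype V] [DecidableEq V] [Fintype E] [DecidableEq E]

/-- Adjacency relation induced by the edges in `F` of a multigraph with endpoint map `ends`. -/
def adjOn (ends : E → V × V) (F : Finset E) (u v : V) : Prop :=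
  ∃ e ∈ F, ends e = (u, v) ∨ ends e = (v, u)

/-- The setoid whose classes are the connected components (isolated vertices form
    their own components). -/
def compSetoid (ends : E → V × V) (F : Finset E) : Setoid V :=
  Relation.EqvGen.setoid (adjOn ends F)

/-- The number of connected components (isolated vertices count as components). -/
noncomputable def zeta (ends : E → V × V) (F : Finset E) : ℕ :=
  Nat.card (Quotient (compSetoid ends F))

/-- The cyclomatic number `γ = m - n + ζ`. -/
noncomputable def gamma (ends : E → V × V) (F : Finset E) : ℕ :=
  F.card + zeta ends F - Fintype.card V

open Classical in
/-- The degree of a vertex (a self-loop counts twice). -/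
noncomputable def deg (ends : E → V × V) (F : Finset E) (v : V) : ℕ :=
  (F.filter (fun e => (ends e).1 = v)).card + (F.filter (fun e => (ends e).2 = v)).card

open Classical in
/-- The vertex set of the connected component of `v`. -/
noncomputable def compVerts (ends : E → V × V) (F : Finset E) (v : V) : Finset V :=
  Finset.univ.filter (fun u => Relation.EqvGen (adjOn ends F) v u)

open Classical in
/-- The edge set of the connected component of `v`. -/
noncomputable def compEdges (ends : E → V × V) (F : Finset E) (v : V) : Finset E :=
  F.filter (fun e => Relation.EqvGen (adjOn ends F) v (ends e).1)

/-- Every connected component is acyclic or unicyclic. -/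
def GoodComponents (ends : E → V × V) (F : Finset E) : Prop :=
  ∀ v, (compEdges ends F v).card ≤ (compVerts ends F v).card

/-- The excess: the minimum number of edges one has to remove from `F` so that all
    connected components of the remaining graph are acyclic or unicyclic. -/
noncomputable def excess (ends : E → V × V) (F : Finset E) : ℕ :=
  sInf {d : ℕ | ∃ F' ⊆ F, F'.card + d = F.card ∧ GoodComponents ends F'}

/-- The number of connected components that contain a cycle. -/
noncomputable def zetaCyc (ends : E → V × V) (F : Finset E) : ℕ :=
  Nat.card {c : Quotient (compSetoid ends F) //
    ∃ v, Quotient.mk (compSetoid ends F) v = c ∧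
      (compVerts ends F v).card ≤ (compEdges ends F v).card}

/-- A graph is acyclic iff every edge is a bridge. -/
def Acyclic (ends : E → V × V) (F : Finset E) : Prop :=
  ∀ e ∈ F, zeta ends (F.erase e) = zeta ends F + 1

/-- `e` is a cycle edge of `F`: removing it does not disconnect anything. -/
def CycleEdge (ends : E → V × V) (F : Finset E) (e : E) : Prop :=
  e ∈ F ∧ zeta ends (F.erase e) = zeta ends F

end CuckooStash

namespace CuckooStash

/-- `G` restricted to the edge set `F` is an excess-`(s+1)` core graph: it is leafless,
has excess exactly `s+1`, and every connected component (of a non-isolated vertex)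
has cyclomatic number at least 2. -/
def CoreGraph {V E : Type*} [Fintype V] [DecidableEq V] [Fintype E] [DecidableEq E]
    (ends : E → V × V) (F : Finset E) (s : ℕ) : Prop :=
  (∀ v, deg ends F v ≠ 1) ∧ excess ends F = s + 1 ∧
    (∀ v, deg ends F v ≠ 0 →
      (compVerts ends F v).card + 1 ≤ (compEdges ends F v).card)

end CuckooStash

/-!
A leafless graph of excess `s + 1` has exactly `s + 1` more edges than non-isolated vertices:
by Hall's theorem every non-isolated vertex can keep a private edge, which leaves a subgraph whose
components have at most as many edges as vertices, and no subgraph with that property has more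
edges than there are non-isolated vertices.
So if the keys `T`, `|T| = t`, span a core graph, the vertex sides `A = h₁(T)` and `B = h₂(T)`
satisfy `|A| + |B| = t - s - 1`, and every vertex has at least two keys. Fixing a disjoint pair of
keys in each fibre (`t^{↓2a} / 2^a` choices for `|A| = a`) and then the remaining values bounds the
number of hash pairs by `n^t m^(t-s-1) t^(3s+3) m^(2(n-t))` for each `(t, a)`. After dividing by
`m^(2n)`, each `t` contributes `t^(3s+4) (n/m)^t / m^(s+1) ≤ t^(3s+4) (1+ε)^(-t) / n^(s+1)`,
and the series `∑ t^D (1+ε)^(-t)` converges.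
-/

namespace CuckooStash

open Finset
open scoped Nat

section Graph

variable {V E : Type*} [DecidableEq V] (ends : E → V × V) {F : Finset E}

lemma deg_ne_zero_iff {v : V} :
    deg ends F v ≠ 0 ↔ ∃ e ∈ F, (ends e).1 = v ∨ (ends e).2 = v := by
  simp only [deg, ne_eq, Nat.add_eq_zero_iff, card_eq_zero, filter_eq_empty_iff, not_and_or,
    not_forall, not_not, exists_prop]
  exact ⟨fun h => h.elim (fun ⟨e, he, h⟩ => ⟨e, he, .inl h⟩) (fun ⟨e, he, h⟩ => ⟨e, he, .inr h⟩),
    fun ⟨e, he, h⟩ => h.imp (⟨e, he, ·⟩) (⟨e, he, ·⟩)⟩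

omit [DecidableEq V] in
lemma adjOn_of_mem {e : E} (he : e ∈ F) : adjOn ends F (ends e).1 (ends e).2 :=
  ⟨e, he, .inl rfl⟩

lemma deg_ne_zero_of_adjOn {u w : V} (h : adjOn ends F u w) :
    deg ends F u ≠ 0 ∧ deg ends F w ≠ 0 := by
  obtain ⟨e, he, h | h⟩ := h <;> rw [Prod.ext_iff] at h
  · exact ⟨(deg_ne_zero_iff ends).2 ⟨e, he, .inl h.1⟩, (deg_ne_zero_iff ends).2 ⟨e, he, .inr h.2⟩⟩
  · exact ⟨(deg_ne_zero_iff ends).2 ⟨e, he, .inr h.2⟩, (deg_ne_zero_iff ends).2 ⟨e, he, .inl h.1⟩⟩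

lemma deg_ne_zero_iff_of_eqvGen {u w : V} (h : Relation.EqvGen (adjOn ends F) u w) :
    deg ends F u ≠ 0 ↔ deg ends F w ≠ 0 := by
  induction h with
  | rel _ _ h => exact iff_of_true (deg_ne_zero_of_adjOn ends h).1 (deg_ne_zero_of_adjOn ends h).2
  | refl => rfl
  | symm _ _ _ ih => exact ih.symm
  | trans _ _ _ _ _ ih₁ ih₂ => exact ih₁.trans ih₂

omit [DecidableEq V] in
lemma mem_compEdges {v : V} {e : E} :
    e ∈ compEdges ends F v ↔ e ∈ F ∧ Relation.EqvGen (adjOn ends F) v (ends e).1 := by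
  simp [compEdges]

variable [Fintype V]

omit [DecidableEq V] in
lemma mem_compVerts {v u : V} :
    u ∈ compVerts ends F v ↔ Relation.EqvGen (adjOn ends F) v u := by
  simp [compVerts]

open Classical in
noncomputable def nonIsolated (ends : E → V × V) (F : Finset E) : Finset V :=
  {v | deg ends F v ≠ 0}

lemma mem_nonIsolated {v : V} : v ∈ nonIsolated ends F ↔ deg ends F v ≠ 0 := by
  simp [nonIsolated]

lemma nonIsolated_mono {F₁ F₂ : Finset E} (h : F₁ ⊆ F₂) :
    nonIsolated ends F₁ ⊆ nonIsolated ends F₂ := by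
  intro v hv
  obtain ⟨e, he, hev⟩ := (deg_ne_zero_iff ends).1 ((mem_nonIsolated ends).1 hv)
  exact (mem_nonIsolated ends).2 ((deg_ne_zero_iff ends).2 ⟨e, h he, hev⟩)

/-- Sum the defining inequality of `GoodComponents` over the components that carry an edge. -/
lemma card_le_card_nonIsolated (hF : GoodComponents ends F) : #F ≤ #(nonIsolated ends F) := by
  classical
  let cls : V → Quotient (compSetoid ends F) := Quotient.mk _
  have hfibre : ∀ e ∈ F, #{e' ∈ F | cls (ends e').1 = cls (ends e).1} ≤
      #{v ∈ nonIsolated ends F | cls v = cls (ends e).1} := by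
    intro e he
    have hv : deg ends F (ends e).1 ≠ 0 := (deg_ne_zero_iff ends).2 ⟨e, he, .inl rfl⟩
    calc #{e' ∈ F | cls (ends e').1 = cls (ends e).1} = #(compEdges ends F (ends e).1) := by
          congr 1; ext e'
          simp only [mem_filter, mem_compEdges, cls, Quotient.eq]
          exact and_congr_right fun _ => ⟨.symm _ _, .symm _ _⟩
      _ ≤ #(compVerts ends F (ends e).1) := hF _
      _ ≤ _ := card_le_card fun u hu => by
          have hu := (mem_compVerts ends).1 hu
          exact mem_filter.2 ⟨(mem_nonIsolated ends).2 ((deg_ne_zero_iff_of_eqvGen ends hu).1 hv),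
            Quotient.sound (hu.symm _ _)⟩
  calc #F = ∑ q ∈ F.image (fun e => cls (ends e).1), #{e ∈ F | cls (ends e).1 = q} :=
        card_eq_sum_card_image _ _
    _ ≤ ∑ q ∈ F.image (fun e => cls (ends e).1), #{v ∈ nonIsolated ends F | cls v = q} := by
        refine sum_le_sum ?_
        simp only [mem_image, forall_exists_index, and_imp]
        rintro _ e he rfl
        exact hfibre e he
    _ = #{v ∈ nonIsolated ends F | cls v ∈ F.image (fun e => cls (ends e).1)} :=
        sum_card_fiberwise_eq_card_filter _ _ _
    _ ≤ #(nonIsolated ends F) := card_filter_le _ _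

variable [DecidableEq E]

/-- Hall's condition for giving each non-isolated vertex a private edge: the degrees of `S` sum to
at least `2 #S`, and each edge is counted at most twice. -/
lemma card_le_card_biUnion_incident (hleaf : ∀ v, deg ends F v ≠ 1)
    (S : Finset (nonIsolated ends F)) :
    #S ≤ #(S.biUnion fun u => {e ∈ F | (ends e).1 = u ∨ (ends e).2 = u}) := by
  set N := S.biUnion fun u => {e ∈ F | (ends e).1 = u ∨ (ends e).2 = u}
  let S' := S.map (Function.Embedding.subtype _)
  have h₁ : #{e ∈ F | (ends e).1 ∈ S'} ≤ #N := card_le_card fun e he => by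
    simp only [mem_filter, S', mem_map, Function.Embedding.coe_subtype] at he
    obtain ⟨he, u, hu, hue⟩ := he
    exact mem_biUnion.2 ⟨u, hu, mem_filter.2 ⟨he, .inl hue.symm⟩⟩
  have h₂ : #{e ∈ F | (ends e).2 ∈ S'} ≤ #N := card_le_card fun e he => by
    simp only [mem_filter, S', mem_map, Function.Embedding.coe_subtype] at he
    obtain ⟨he, u, hu, hue⟩ := he
    exact mem_biUnion.2 ⟨u, hu, mem_filter.2 ⟨he, .inr hue.symm⟩⟩
  have htwo : ∀ u ∈ S, 2 ≤ deg ends F u := fun u _ => by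
    have := (mem_nonIsolated ends).1 u.2
    have := hleaf u
    omega
  have hsum : 2 * #S ≤ #{e ∈ F | (ends e).1 ∈ S'} + #{e ∈ F | (ends e).2 ∈ S'} :=
    calc 2 * #S = ∑ _u ∈ S, 2 := by rw [sum_const, smul_eq_mul, mul_comm]
      _ ≤ ∑ u ∈ S, deg ends F u := sum_le_sum htwo
      _ = ∑ v ∈ S', deg ends F v := by rw [sum_map]; rfl
      _ = _ := by simp only [deg, sum_add_distrib, sum_card_fiberwise_eq_card_filter]
  omega

lemma exists_goodComponents_card_eq (hleaf : ∀ v, deg ends F v ≠ 1) :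
    ∃ F' ⊆ F, GoodComponents ends F' ∧ #F' = #(nonIsolated ends F) := by
  obtain ⟨f, hf, hfinc⟩ :=
    (all_card_le_biUnion_card_iff_exists_injective _).1 (card_le_card_biUnion_incident ends hleaf)
  refine ⟨univ.image f, ?_, fun w => ?_, by rw [card_image_of_injective _ hf, card_univ,
    Fintype.card_coe]⟩
  · rintro _ he
    obtain ⟨u, -, rfl⟩ := mem_image.1 he
    exact (mem_filter.1 (hfinc u)).1
  let U : Finset (nonIsolated ends F) := {u | f u ∈ compEdges ends (univ.image f) w}
  calc #(compEdges ends (univ.image f) w) ≤ #(U.image f) := card_le_card fun e he => by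
        obtain ⟨u, -, rfl⟩ := mem_image.1 ((mem_compEdges ends).1 he).1
        exact mem_image_of_mem f (mem_filter.2 ⟨mem_univ u, he⟩)
    _ ≤ #U := card_image_le
    _ ≤ #(compVerts ends (univ.image f) w) := by
        refine card_le_card_of_injOn Subtype.val (fun u hu => ?_) Subtype.val_injective.injOn
        obtain ⟨hfu, hwu⟩ := (mem_compEdges ends).1 (mem_filter.1 hu).2
        refine (mem_compVerts ends).2 ?_
        rcases (mem_filter.1 (hfinc u)).2 with h | h
        · exact h ▸ hwu
        · exact h ▸ hwu.trans _ _ _ (.rel _ _ (adjOn_of_mem ends hfu))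

lemma excess_add_card_nonIsolated (hleaf : ∀ v, deg ends F v ≠ 1) :
    excess ends F + #(nonIsolated ends F) = #F := by
  obtain ⟨F', hF'F, hF', hcard⟩ := exists_goodComponents_card_eq ends hleaf
  have hmem : #F - #F' ∈ {d | ∃ F₂ ⊆ F, #F₂ + d = #F ∧ GoodComponents ends F₂} :=
    ⟨F', hF'F, Nat.add_sub_of_le (card_le_card hF'F), hF'⟩
  have hle : excess ends F ≤ #F - #F' := Nat.sInf_le hmem
  obtain ⟨F₂, hF₂F, hcard₂, hF₂⟩ := Nat.sInf_mem ⟨_, hmem⟩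
  have := (card_le_card_nonIsolated ends hF₂).trans (card_le_card (nonIsolated_mono ends hF₂F))
  have := card_le_card hF'F
  rw [excess] at hle ⊢
  omega

end Graph

section Cuckoo

variable {α β : Type*} [DecidableEq β]

abbrev cuckooEnds (h₁ h₂ : α → β) : α → (β ⊕ β) × (β ⊕ β) :=
  fun x => (.inl (h₁ x), .inr (h₂ x))

def CoversTwice (g : α → β) (T : Finset α) (A : Finset β) : Prop :=
  (∀ x ∈ T, g x ∈ A) ∧ ∀ v ∈ A, 2 ≤ #{x ∈ T | g x = v}

variable (h₁ h₂ : α → β) (T : Finset α)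

lemma deg_cuckooEnds_inl (v : β) : deg (cuckooEnds h₁ h₂) T (.inl v) = #{x ∈ T | h₁ x = v} := by
  simp [deg]

lemma deg_cuckooEnds_inr (v : β) : deg (cuckooEnds h₁ h₂) T (.inr v) = #{x ∈ T | h₂ x = v} := by
  simp [deg]

lemma coversTwice_image {g : α → β} (hg : ∀ v, #{x ∈ T | g x = v} ≠ 1) :
    CoversTwice g T (T.image g) := by
  refine ⟨fun x hx => mem_image_of_mem g hx, fun v hv => ?_⟩
  obtain ⟨x, hx, rfl⟩ := mem_image.1 hv
  have : 0 < #{y ∈ T | g y = g x} := card_pos.2 ⟨x, mem_filter.2 ⟨hx, rfl⟩⟩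
  have := hg (g x)
  omega

variable [Fintype β]

lemma nonIsolated_cuckooEnds :
    nonIsolated (cuckooEnds h₁ h₂) T = (T.image h₁).disjSum (T.image h₂) := by
  ext (v | v) <;> simp [mem_nonIsolated, deg_ne_zero_iff]

variable {h₁ h₂ T} [Fintype α] [DecidableEq α] {s : ℕ}

lemma CoreGraph.coversTwice_left (h : CoreGraph (cuckooEnds h₁ h₂) T s) :
    CoversTwice h₁ T (T.image h₁) :=
  coversTwice_image T fun v => deg_cuckooEnds_inl h₁ h₂ T v ▸ h.1 (.inl v)

lemma CoreGraph.coversTwice_right (h : CoreGraph (cuckooEnds h₁ h₂) T s) :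
    CoversTwice h₂ T (T.image h₂) :=
  coversTwice_image T fun v => deg_cuckooEnds_inr h₁ h₂ T v ▸ h.1 (.inr v)

lemma CoreGraph.card_image_add_card_image (h : CoreGraph (cuckooEnds h₁ h₂) T s) :
    #(T.image h₁) + #(T.image h₂) + (s + 1) = #T := by
  have := excess_add_card_nonIsolated (cuckooEnds h₁ h₂) h.1
  rw [h.2.1, nonIsolated_cuckooEnds, card_disjSum] at this
  omega

end Cuckoo

section Counting

variable {α β : Type*} [Fintype α] [DecidableEq α] [Fintype β] [DecidableEq β]

open Classical in
noncomputable def pairFamilies (U : Finset α) (A : Finset β) : Finset (β → Finset α) :=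
  {P | (∀ v ∈ A, P v ⊆ U ∧ #(P v) = 2) ∧ (∀ v ∉ A, P v = ∅) ∧ (A : Set β).PairwiseDisjoint P}

lemma mem_pairFamilies {U : Finset α} {A : Finset β} {P : β → Finset α} :
    P ∈ pairFamilies U A ↔
      (∀ v ∈ A, P v ⊆ U ∧ #(P v) = 2) ∧ (∀ v ∉ A, P v = ∅) ∧ (A : Set β).PairwiseDisjoint P := by
  simp [pairFamilies]

lemma update_mem_pairFamilies {U p : Finset α} {A : Finset β} {v₀ : β} (hv₀ : v₀ ∉ A)
    {P : β → Finset α} (hP : P ∈ pairFamilies U (insert v₀ A)) (hp : P v₀ = p) :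
    Function.update P v₀ ∅ ∈ pairFamilies (U \ p) A := by
  obtain ⟨hpair, hempty, hdisj⟩ := mem_pairFamilies.1 hP
  have hne {v} (hv : v ∈ A) : v ≠ v₀ := ne_of_mem_of_not_mem hv hv₀
  refine mem_pairFamilies.2 ⟨fun v hv => ?_, fun v hv => ?_, fun v hv w hw hvw => ?_⟩
  · rw [Function.update_of_ne (hne hv)]
    obtain ⟨hU, hcard⟩ := hpair v (mem_insert_of_mem hv)
    refine ⟨fun x hx => mem_sdiff.2 ⟨hU hx, fun hxp => ?_⟩, hcard⟩
    exact disjoint_left.1 (hdisj (mem_insert_of_mem hv) (mem_insert_self v₀ A) (hne hv)) hx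
      (hp ▸ hxp)
  · rcases eq_or_ne v v₀ with rfl | hvv₀
    · exact Function.update_self ..
    · rw [Function.update_of_ne hvv₀]
      exact hempty v (by simp [hvv₀, hv])
  · simp only [Function.onFun, Function.update_of_ne (hne hv), Function.update_of_ne (hne hw)]
    exact hdisj (mem_insert_of_mem hv) (mem_insert_of_mem hw) hvw

lemma card_filter_pairFamilies_le {U : Finset α} {A : Finset β} {v₀ : β} (hv₀ : v₀ ∉ A)
    (p : Finset α) :
    #{P ∈ pairFamilies U (insert v₀ A) | P v₀ = p} ≤ #(pairFamilies (U \ p) A) := by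
  refine card_le_card_of_injOn (Function.update · v₀ ∅)
    (fun P hP => update_mem_pairFamilies hv₀ (mem_filter.1 hP).1 (mem_filter.1 hP).2)
    fun P₁ h₁ P₂ h₂ h => funext fun v => ?_
  rcases eq_or_ne v v₀ with rfl | hv
  · exact (mem_filter.1 h₁).2.trans (mem_filter.1 h₂).2.symm
  · simpa [Function.update_of_ne hv] using congrFun h v

lemma card_pairFamilies_mul_two_pow_le (U : Finset α) (A : Finset β) :
    #(pairFamilies U A) * 2 ^ #A ≤ (#U).descFactorial (2 * #A) := by
  induction A using Finset.induction_on generalizing U with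
  | empty =>
    simpa using card_le_one.2 fun P₁ h₁ P₂ h₂ =>
      funext fun v => ((mem_pairFamilies.1 h₁).2.1 v (notMem_empty v)).trans
        ((mem_pairFamilies.1 h₂).2.1 v (notMem_empty v)).symm
  | @insert v₀ A hv₀ ih =>
    have hmaps : ∀ P ∈ pairFamilies U (insert v₀ A), P v₀ ∈ U.powersetCard 2 := fun P hP =>
      mem_powersetCard.2 ((mem_pairFamilies.1 hP).1 v₀ (mem_insert_self v₀ A))
    have hsdiff : ∀ p ∈ U.powersetCard 2, #(U \ p) = #U - 2 := fun p hp => by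
      rw [card_sdiff_of_subset (mem_powersetCard.1 hp).1, (mem_powersetCard.1 hp).2]
    calc #(pairFamilies U (insert v₀ A)) * 2 ^ #(insert v₀ A)
        = (∑ p ∈ U.powersetCard 2, #{P ∈ pairFamilies U (insert v₀ A) | P v₀ = p}) *
            2 ^ #A * 2 := by
          rw [card_eq_sum_card_fiberwise hmaps, card_insert_of_notMem hv₀, pow_succ, mul_assoc]
      _ ≤ (∑ p ∈ U.powersetCard 2, #(pairFamilies (U \ p) A)) * 2 ^ #A * 2 :=
          Nat.mul_le_mul_right _ (Nat.mul_le_mul_right _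
            (sum_le_sum fun p _ => card_filter_pairFamilies_le hv₀ p))
      _ = ∑ p ∈ U.powersetCard 2, #(pairFamilies (U \ p) A) * 2 ^ #A * 2 := by
          rw [sum_mul, sum_mul]
      _ ≤ ∑ _p ∈ U.powersetCard 2, (#U - 2).descFactorial (2 * #A) * 2 := by
          gcongr with p hp
          exact hsdiff p hp ▸ ih (U \ p)
      _ = (#U - 2).descFactorial (2 * #A + 2 - 2) * (#U).descFactorial 2 := by
          rw [sum_const, card_powersetCard, smul_eq_mul,
            Nat.descFactorial_eq_factorial_mul_choose (#U), Nat.factorial_two, Nat.add_sub_cancel]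
          ring
      _ = (#U).descFactorial (2 * #(insert v₀ A)) := by
          rw [Nat.descFactorial_mul_descFactorial (by omega), card_insert_of_notMem hv₀,
            mul_add_one]

lemma CoversTwice.exists_pairFamilies {g : α → β} {T : Finset α} {A : Finset β}
    (hg : CoversTwice g T A) : ∃ P ∈ pairFamilies T A, ∀ v ∈ A, ∀ x ∈ P v, g x = v := by
  choose Q hQ using fun v (hv : v ∈ A) => exists_subset_card_eq (hg.2 v hv)
  have hQg {v} (hv : v ∈ A) {x} (hx : x ∈ Q v hv) : g x = v := (mem_filter.1 ((hQ v hv).1 hx)).2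
  refine ⟨fun v => if hv : v ∈ A then Q v hv else ∅, mem_pairFamilies.2 ⟨fun v hv => ?_,
    fun v hv => dif_neg hv, fun v hv w hw hvw => ?_⟩, fun v hv x hx => ?_⟩
  · rw [dif_pos hv]
    exact ⟨(hQ v hv).1.trans (filter_subset _ _), (hQ v hv).2⟩
  · simp only [Function.onFun, dif_pos (mem_coe.1 hv), dif_pos (mem_coe.1 hw)]
    exact disjoint_left.2 fun x hxv hxw => hvw ((hQg hv hxv).symm.trans (hQg hw hxw))
  · simp only [dif_pos hv] at hx
    exact hQg hv hx

lemma card_eqOn_mapsTo_le (g₀ : α → β) {S T : Finset α} (hST : S ⊆ T) (A : Finset β) :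
    #{g : α → β | (∀ x ∈ S, g x = g₀ x) ∧ ∀ x ∈ T, g x ∈ A} ≤
      #A ^ #(T \ S) * Fintype.card β ^ #Tᶜ := by
  calc #{g : α → β | (∀ x ∈ S, g x = g₀ x) ∧ ∀ x ∈ T, g x ∈ A}
      ≤ #(Fintype.piFinset fun x => if x ∈ S then {g₀ x} else if x ∈ T then A else univ) := by
        refine card_le_card fun g hg => Fintype.mem_piFinset.2 fun x => ?_
        simp only [mem_filter, mem_univ, true_and] at hg
        split_ifs with hxS hxT
        · exact mem_singleton.2 (hg.1 x hxS)
        · exact hg.2 x hxT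
        · exact mem_univ _
    _ = ∏ x, if x ∈ S then 1 else if x ∈ T then #A else Fintype.card β := by
        rw [Fintype.card_piFinset]
        refine prod_congr rfl fun x _ => ?_
        split_ifs <;> simp
    _ = ∏ x, (if x ∈ T \ S then #A else 1) * (if x ∈ Tᶜ then Fintype.card β else 1) := by
        refine prod_congr rfl fun x _ => ?_
        by_cases hS : x ∈ S
        · simp [hS, hST hS]
        · by_cases hT : x ∈ T <;> simp [hS, hT]
    _ = #A ^ #(T \ S) * Fintype.card β ^ #Tᶜ := by
        rw [prod_mul_distrib, prod_ite_mem, prod_ite_mem, prod_const, prod_const, univ_inter,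
          univ_inter]

open Classical in
/-- `g` is determined by its family of pairs `P` (a disjoint pair inside each fibre) together with
its values off `⋃ P`. -/
lemma card_coversTwice_le (T : Finset α) (A : Finset β) :
    #{g : α → β | CoversTwice g T A} ≤
      #A ^ (#T - 2 * #A) * Fintype.card β ^ (Fintype.card α - #T) * #(pairFamilies T A) := by
  choose! pick hpickP hpickG using fun g (hg : CoversTwice g T A) => hg.exists_pairFamilies
  refine card_le_mul_card_image_of_maps_to (f := pick) (fun g hg => hpickP g (mem_filter.1 hg).2)
    _ fun P hP => ?_
  obtain ⟨hpair, -, hdisj⟩ := mem_pairFamilies.1 hP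
  rcases eq_empty_or_nonempty {g ∈ {g : α → β | CoversTwice g T A} | pick g = P} with h | ⟨g₀, hg₀⟩
  · simp [h]
  simp only [mem_filter, mem_univ, true_and] at hg₀
  let S := A.biUnion P
  have hST : S ⊆ T := biUnion_subset.2 fun v hv => (hpair v hv).1
  have hS : #S = 2 * #A := by
    rw [card_biUnion fun v hv w hw => hdisj hv hw, sum_congr rfl fun v hv => (hpair v hv).2,
      sum_const, smul_eq_mul, mul_comm]
  calc #{g ∈ {g : α → β | CoversTwice g T A} | pick g = P}
      ≤ #{g : α → β | (∀ x ∈ S, g x = g₀ x) ∧ ∀ x ∈ T, g x ∈ A} := card_le_card fun g hg => by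
        simp only [mem_filter, mem_univ, true_and] at hg ⊢
        refine ⟨fun x hx => ?_, hg.1.1⟩
        obtain ⟨v, hv, hxv⟩ := mem_biUnion.1 hx
        rw [hpickG g hg.1 v hv x (hg.2 ▸ hxv), hpickG g₀ hg₀.1 v hv x (hg₀.2 ▸ hxv)]
    _ ≤ #A ^ #(T \ S) * Fintype.card β ^ #Tᶜ := card_eqOn_mapsTo_le g₀ hST A
    _ = _ := by rw [card_sdiff_of_subset hST, hS, card_compl]

open Classical in
lemma card_coversTwice_mul_two_pow_le (T : Finset α) (A : Finset β) :
    #{g : α → β | CoversTwice g T A} * 2 ^ #A ≤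
      (#T).descFactorial (2 * #A) * #A ^ (#T - 2 * #A) *
        Fintype.card β ^ (Fintype.card α - #T) := by
  calc #{g : α → β | CoversTwice g T A} * 2 ^ #A
      ≤ #A ^ (#T - 2 * #A) * Fintype.card β ^ (Fintype.card α - #T) *
          (#(pairFamilies T A) * 2 ^ #A) := by
        rw [← mul_assoc]
        exact Nat.mul_le_mul_right _ (card_coversTwice_le T A)
    _ ≤ #A ^ (#T - 2 * #A) * Fintype.card β ^ (Fintype.card α - #T) *
          (#T).descFactorial (2 * #A) := by
        gcongr
        exact card_pairFamilies_mul_two_pow_le T A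
    _ = _ := by ring

end Counting

section Estimates

noncomputable def coverBound (t a : ℕ) : ℝ := t.descFactorial (2 * a) * a ^ (t - 2 * a) / 2 ^ a

lemma coverBound_nonneg (t a : ℕ) : 0 ≤ coverBound t a := by
  unfold coverBound
  positivity

lemma factorial_le_two_pow_mul_factorial_mul_factorial_mul_pow (a b k : ℕ) :
    (a + b + k)! ≤ 2 ^ (a + b) * a ! * b ! * (a + b + k) ^ k := by
  calc (a + b + k)! = (a + b)! * (a + b + 1).ascFactorial k :=
        (Nat.factorial_mul_ascFactorial _ _).symm
    _ ≤ (2 ^ (a + b) * a ! * b !) * (a + b + k) ^ k := by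
        gcongr
        · rw [← Nat.add_choose_mul_factorial_mul_factorial a b]
          gcongr
          exact Nat.choose_le_two_pow _ _
        · exact Nat.ascFactorial_le_pow_add _ _

lemma coverBound_le {t a : ℕ} (h : 2 * a ≤ t) :
    coverBound t a ≤ t ! * t ^ (t - 2 * a) / 2 ^ a := by
  unfold coverBound
  have hdesc : t.descFactorial (2 * a) ≤ t ! := by
    rw [← Nat.factorial_mul_descFactorial h]
    exact Nat.le_mul_of_pos_left _ (Nat.factorial_pos _)
  gcongr
  exact_mod_cast (by omega : a ≤ t)

lemma coverBound_eq_zero {t a : ℕ} (h : t < 2 * a) : coverBound t a = 0 := by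
  simp [coverBound, Nat.descFactorial_eq_zero_iff_lt.2 h]

/-- The factors `t!` and `a! b! 2^(a+b)` cancel up to `t^(s+1)` because `t - (a + b) = s + 1`,
and the leftover exponents satisfy `(t - 2a) + (t - 2b) = 2s + 2`. -/
lemma choose_mul_coverBound_le {n m s t a b : ℕ} (h : a + b + s + 1 = t) :
    (n.choose t : ℝ) * (m.choose a * (m.choose b * (coverBound t a * coverBound t b))) ≤
      n ^ t * m ^ (a + b) * t ^ (3 * s + 3) := by
  by_cases hab : 2 * a ≤ t ∧ 2 * b ≤ t
  swap
  · rcases not_and_or.1 hab with ha | hb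
    · rw [coverBound_eq_zero (by omega), zero_mul]
      simp only [mul_zero]
      positivity
    · rw [coverBound_eq_zero (t := t) (a := b) (by omega)]
      simp only [mul_zero]
      positivity
  have ht : (1 : ℝ) ≤ t := by exact_mod_cast (by omega : 1 ≤ t)
  have hfact : (t ! : ℝ) ≤ 2 ^ (a + b) * a ! * b ! * t ^ (s + 1) := by
    have := factorial_le_two_pow_mul_factorial_mul_factorial_mul_pow a b (s + 1)
    rw [← add_assoc, h] at this
    exact_mod_cast this
  have hexp : (t : ℝ) ^ (t - 2 * a) * t ^ (t - 2 * b) = t ^ (2 * s + 2) := by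
    rw [← pow_add]
    congr 1
    omega
  calc (n.choose t : ℝ) * (m.choose a * (m.choose b * (coverBound t a * coverBound t b)))
      ≤ n ^ t / t ! * (m ^ a / a ! * (m ^ b / b ! *
          (t ! * t ^ (t - 2 * a) / 2 ^ a * (t ! * t ^ (t - 2 * b) / 2 ^ b)))) := by
        have := coverBound_nonneg t a
        have := coverBound_nonneg t b
        have := coverBound_le hab.1
        have := coverBound_le hab.2
        have := Nat.choose_le_pow_div (α := ℝ) t n
        have := Nat.choose_le_pow_div (α := ℝ) a m
        have := Nat.choose_le_pow_div (α := ℝ) b m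
        gcongr
    _ = n ^ t * m ^ (a + b) * t ^ (2 * s + 2) * (t ! / (2 ^ (a + b) * a ! * b !)) := by
        rw [← hexp]
        field_simp
        ring
    _ ≤ n ^ t * m ^ (a + b) * t ^ (2 * s + 2) * t ^ (s + 1) := by
        gcongr
        exact div_le_of_le_mul₀ (by positivity) (by positivity) (by linarith)
    _ = n ^ t * m ^ (a + b) * t ^ (3 * s + 3) := by ring

variable {α β : Type*} [Fintype α] [DecidableEq α] [Fintype β] [DecidableEq β]

open Classical in
lemma card_coversTwice_le_coverBound (T : Finset α) (A : Finset β) :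
    (#{g : α → β | CoversTwice g T A} : ℝ) ≤
      coverBound #T #A * Fintype.card β ^ (Fintype.card α - #T) := by
  unfold coverBound
  rw [div_mul_eq_mul_div, le_div_iff₀ (by positivity)]
  exact_mod_cast card_coversTwice_mul_two_pow_le T A

lemma cast_card_biUnion_le {ι γ : Type*} [DecidableEq γ] (s : Finset ι) (f : ι → Finset γ) :
    (#(s.biUnion f) : ℝ) ≤ ∑ i ∈ s, (#(f i) : ℝ) := by
  exact_mod_cast card_biUnion_le

lemma cast_card_biUnion_powersetCard_le {ι γ : Type*} [Fintype ι] [DecidableEq ι] [DecidableEq γ]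
    (k : ℕ) (f : Finset ι → Finset γ) {c : ℝ} (hc : ∀ T : Finset ι, #T = k → (#(f T) : ℝ) ≤ c) :
    (#((powersetCard k univ).biUnion f) : ℝ) ≤ (Fintype.card ι).choose k * c := by
  calc (#((powersetCard k univ).biUnion f) : ℝ) ≤ ∑ T ∈ powersetCard k univ, (#(f T) : ℝ) :=
        cast_card_biUnion_le _ _
    _ ≤ ∑ _T ∈ powersetCard k (univ : Finset ι), c :=
        sum_le_sum fun T hT => hc T (mem_powersetCard.1 hT).2
    _ = _ := by rw [sum_const, card_powersetCard, card_univ, nsmul_eq_mul]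

open Classical in
/-- Union bound over the edge set `T` and the two vertex sides `A = h₁ '' T`, `B = h₂ '' T`. -/
lemma card_coreGraph_le (s : ℕ) :
    (#{hh : (α → β) × (α → β) | ∃ T : Finset α, CoreGraph (cuckooEnds hh.1 hh.2) T s} : ℝ) ≤
      ∑ t ∈ range (Fintype.card α + 1), (Fintype.card α).choose t *
        ∑ a ∈ range (t - s), (Fintype.card β).choose a * ((Fintype.card β).choose (t - s - 1 - a) *
          (coverBound t a * Fintype.card β ^ (Fintype.card α - t) *
            (coverBound t (t - s - 1 - a) * Fintype.card β ^ (Fintype.card α - t)))) := by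
  let pairs (T : Finset α) (A B : Finset β) : Finset ((α → β) × (α → β)) :=
    ({g | CoversTwice g T A} : Finset (α → β)) ×ˢ ({g | CoversTwice g T B} : Finset (α → β))
  have hsub : ({hh : (α → β) × (α → β) | ∃ T : Finset α, CoreGraph (cuckooEnds hh.1 hh.2) T s} :
      Finset _) ⊆
      (range (Fintype.card α + 1)).biUnion fun t => (powersetCard t univ).biUnion fun T =>
        (range (t - s)).biUnion fun a => (powersetCard a univ).biUnion fun A =>
          (powersetCard (t - s - 1 - a) univ).biUnion fun B => pairs T A B := by
    intro hh hmem
    obtain ⟨T, hT⟩ := (mem_filter.1 hmem).2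
    have hcard := hT.card_image_add_card_image
    simp only [mem_biUnion, mem_range, mem_powersetCard, subset_univ, true_and, pairs,
      mem_product, mem_filter, mem_univ]
    exact ⟨#T, Nat.lt_succ_of_le (card_le_univ T), T, rfl, #(T.image hh.1), by omega, _, rfl,
      _, by omega, hT.coversTwice_left, hT.coversTwice_right⟩
  refine (Nat.cast_le.2 (card_le_card hsub)).trans ?_
  refine (cast_card_biUnion_le _ _).trans (sum_le_sum fun t _ => ?_)
  refine cast_card_biUnion_powersetCard_le t _ fun T hT => ?_
  refine (cast_card_biUnion_le _ _).trans (sum_le_sum fun a _ => ?_)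
  refine cast_card_biUnion_powersetCard_le a _ fun A hA => ?_
  refine cast_card_biUnion_powersetCard_le _ _ fun B hB => ?_
  subst hT hA
  rw [card_product, Nat.cast_mul, ← hB]
  exact mul_le_mul (card_coversTwice_le_coverBound T A) (card_coversTwice_le_coverBound T B)
    (Nat.cast_nonneg _) (mul_nonneg (coverBound_nonneg _ _) (by positivity))

open Classical in
lemma card_coreGraph_div_le (s : ℕ) (hβ : 0 < Fintype.card β) :
    (#{hh : (α → β) × (α → β) | ∃ T : Finset α, CoreGraph (cuckooEnds hh.1 hh.2) T s} : ℝ) /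
        ((Fintype.card β : ℝ) ^ Fintype.card α * (Fintype.card β : ℝ) ^ Fintype.card α) ≤
      ∑ t ∈ range (Fintype.card α + 1), (t : ℝ) ^ (3 * s + 4) * Fintype.card α ^ t /
        (Fintype.card β : ℝ) ^ (t + s + 1) := by
  set n := Fintype.card α
  set m := Fintype.card β
  have hm : (0 : ℝ) < m := by exact_mod_cast hβ
  rw [div_le_iff₀ (by positivity), sum_mul]
  refine (card_coreGraph_le s).trans (sum_le_sum fun t ht => ?_)
  rcases lt_or_ge t (s + 1) with hts | hts
  · rw [Nat.sub_eq_zero_of_le (by omega : t ≤ s), range_zero, sum_empty, mul_zero]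
    positivity
  have hpow : (m : ℝ) ^ (t - s - 1) * (m ^ (n - t) * m ^ (n - t)) * m ^ (t + s + 1) =
      m ^ n * m ^ n := by
    simp only [← pow_add]
    congr 1
    have := mem_range.1 ht
    omega
  calc (n.choose t : ℝ) * ∑ a ∈ range (t - s), (m.choose a : ℝ) * (m.choose (t - s - 1 - a) *
        (coverBound t a * m ^ (n - t) * (coverBound t (t - s - 1 - a) * m ^ (n - t))))
      = ∑ a ∈ range (t - s), (n.choose t : ℝ) * (m.choose a * (m.choose (t - s - 1 - a) *
          (coverBound t a * coverBound t (t - s - 1 - a)))) * (m ^ (n - t) * m ^ (n - t)) := by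
        rw [mul_sum]
        exact sum_congr rfl fun _ _ => by ring
    _ ≤ ∑ _a ∈ range (t - s), (n : ℝ) ^ t * m ^ (t - s - 1) * t ^ (3 * s + 3) *
          (m ^ (n - t) * m ^ (n - t)) := by
        refine sum_le_sum fun a ha => mul_le_mul_of_nonneg_right ?_ (by positivity)
        have := mem_range.1 ha
        have h := choose_mul_coverBound_le (n := n) (m := m)
          (by omega : a + (t - s - 1 - a) + s + 1 = t)
        rwa [show a + (t - s - 1 - a) = t - s - 1 by omega] at h
    _ ≤ t * ((n : ℝ) ^ t * m ^ (t - s - 1) * t ^ (3 * s + 3) * (m ^ (n - t) * m ^ (n - t))) := by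
        rw [sum_const, card_range, nsmul_eq_mul]
        gcongr
        exact_mod_cast Nat.sub_le t s
    _ = (t : ℝ) ^ (3 * s + 4) * n ^ t / m ^ (t + s + 1) * (m ^ n * m ^ n) := by
        rw [← hpow]
        field_simp
        ring

end Estimates

lemma exists_sum_pow_mul_div_pow_le {ε : ℝ} (hε : 0 < ε) (s D : ℕ) :
    ∃ K : ℝ, 0 < K ∧ ∀ n m : ℕ, 1 ≤ n → (1 + ε) * (n : ℝ) ≤ (m : ℝ) →
      ∑ t ∈ range (n + 1), (t : ℝ) ^ D * n ^ t / (m : ℝ) ^ (t + s + 1) ≤ K / (n : ℝ) ^ (s + 1) := by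
  set ρ := (1 + ε)⁻¹
  have hρ0 : 0 < ρ := inv_pos.2 (by linarith)
  have hρ1 : ρ < 1 := inv_lt_one_of_one_lt₀ (by linarith)
  have hsum : Summable fun t : ℕ => (t : ℝ) ^ D * ρ ^ t :=
    summable_pow_mul_geometric_of_norm_lt_one D (by rwa [Real.norm_of_nonneg hρ0.le])
  have htsum : 0 ≤ ∑' t : ℕ, (t : ℝ) ^ D * ρ ^ t := tsum_nonneg fun _ => by positivity
  refine ⟨∑' t : ℕ, (t : ℝ) ^ D * ρ ^ t + 1, by linarith, fun n m hn hnm => ?_⟩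
  have hn0 : (0 : ℝ) < n := by exact_mod_cast hn
  have hnρm : (n : ℝ) ≤ ρ * m := by
    rw [inv_mul_eq_div, le_div_iff₀ (by linarith)]
    linarith
  have hnm' : n ≤ m := by exact_mod_cast (show (n : ℝ) ≤ m by nlinarith)
  have hm0 : (0 : ℝ) < m := by exact_mod_cast (by omega : 0 < m)
  have hterm (t : ℕ) : (n : ℝ) ^ t / (m : ℝ) ^ (t + s + 1) ≤ ρ ^ t / (n : ℝ) ^ (s + 1) := by
    rw [div_le_div_iff₀ (by positivity) (by positivity)]
    calc (n : ℝ) ^ t * n ^ (s + 1) ≤ (ρ * m) ^ t * m ^ (s + 1) := by gcongr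
      _ = ρ ^ t * m ^ (t + s + 1) := by ring
  calc ∑ t ∈ range (n + 1), (t : ℝ) ^ D * n ^ t / (m : ℝ) ^ (t + s + 1)
      ≤ ∑ t ∈ range (n + 1), (t : ℝ) ^ D * ρ ^ t / (n : ℝ) ^ (s + 1) := by
        refine sum_le_sum fun t _ => ?_
        rw [mul_div_assoc, mul_div_assoc]
        exact mul_le_mul_of_nonneg_left (hterm t) (by positivity)
    _ = (∑ t ∈ range (n + 1), (t : ℝ) ^ D * ρ ^ t) / (n : ℝ) ^ (s + 1) := (sum_div ..).symm
    _ ≤ _ := by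
        gcongr
        exact (hsum.sum_le_tsum _ fun _ _ => by positivity).trans
          (le_add_of_nonneg_right zero_le_one)

lemma sum_Icc_choose_mul_factorial_le (n m s C : ℕ) (hm : 0 < m) :
    ∑ t ∈ Icc (s + 3) n, (n.choose t : ℝ) * 2 ^ (s + 1) * (m : ℝ) ^ (t - s - 1)
        * (t ! : ℝ) * (t : ℝ) ^ C / (m : ℝ) ^ (2 * t) ≤
      2 ^ (s + 1) * ∑ t ∈ range (n + 1), (t : ℝ) ^ C * n ^ t / (m : ℝ) ^ (t + s + 1) := by
  have hm' : (0 : ℝ) < m := by exact_mod_cast hm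
  rw [mul_sum]
  refine (sum_le_sum fun t ht => ?_).trans (sum_le_sum_of_subset_of_nonneg
    (fun t ht => mem_range.2 (by have := mem_Icc.1 ht; omega)) fun _ _ _ => by positivity)
  have hts := (mem_Icc.1 ht).1
  have hpow : (m : ℝ) ^ (2 * t) = m ^ (t - s - 1) * m ^ (t + s + 1) := by
    rw [← pow_add]
    congr 1
    omega
  have hchoose : (n.choose t : ℝ) * t ! ≤ n ^ t :=
    (le_div_iff₀ (by positivity)).1 (Nat.choose_le_pow_div t n)
  calc (n.choose t : ℝ) * 2 ^ (s + 1) * m ^ (t - s - 1) * t ! * t ^ C / m ^ (2 * t)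
      = 2 ^ (s + 1) * (t ^ C * (n.choose t * t !) / m ^ (t + s + 1)) := by
        rw [hpow]
        field_simp
    _ ≤ 2 ^ (s + 1) * (t ^ C * n ^ t / m ^ (t + s + 1)) := by gcongr

end CuckooStash

open CuckooStash

open Classical in
/-- For fully random hash functions `h₁, h₂ : S → [m]` with `m ≥ (1+ε)n` and `|S| = n`,
the probability that some subset `T ⊆ S` spans an excess-`(s+1)` core graph in the
cuckoo graph is `O(1/n^(s+1))`; moreover the counting estimate
`∑_{t=s+3}^{n} C(n,t) · 2^(s+1) · m^(t-s-1) · t! · t^C / m^(2t) = O(1/n^(s+1))`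
holds for every constant exponent `C` (playing the role of `t^{O(s)}`). -/
theorem stmt_16 (ε : ℝ) (hε : 0 < ε) (s C : ℕ) :
    ∃ K : ℝ, 0 < K ∧ ∀ n m : ℕ, 1 ≤ n → (1 + ε) * (n : ℝ) ≤ (m : ℝ) →
      (((Finset.univ.filter (fun hh : (Fin n → Fin m) × (Fin n → Fin m) =>
            ∃ T : Finset (Fin n),
              CoreGraph (fun x : Fin n =>
                ((Sum.inl (hh.1 x) : Fin m ⊕ Fin m),
                 (Sum.inr (hh.2 x) : Fin m ⊕ Fin m))) T s)).card : ℝ)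
          / ((m : ℝ) ^ n * (m : ℝ) ^ n)
        ≤ K / (n : ℝ) ^ (s + 1)) ∧
      (∑ t ∈ Finset.Icc (s + 3) n,
          (n.choose t : ℝ) * 2 ^ (s + 1) * (m : ℝ) ^ (t - s - 1)
            * (Nat.factorial t : ℝ) * (t : ℝ) ^ C / (m : ℝ) ^ (2 * t)
        ≤ K / (n : ℝ) ^ (s + 1)) := by
  obtain ⟨K₁, hK₁, hcore⟩ := exists_sum_pow_mul_div_pow_le hε s (3 * s + 4)
  obtain ⟨K₂, hK₂, hsum⟩ := exists_sum_pow_mul_div_pow_le hε s C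
  refine ⟨K₁ + 2 ^ (s + 1) * K₂, by positivity, fun n m hn hnm => ?_⟩
  have hm : 0 < m := Nat.cast_pos.1 ((mul_pos (by linarith) (by exact_mod_cast hn)).trans_le hnm)
  refine ⟨?_, ?_⟩
  · calc _ ≤ _ := by
          simpa using card_coreGraph_div_le (α := Fin n) (β := Fin m) s (by simpa using hm)
      _ ≤ K₁ / (n : ℝ) ^ (s + 1) := hcore n m hn hnm
      _ ≤ _ := by gcongr; linarith [mul_pos (pow_pos two_pos (s + 1)) hK₂]
  · calc _ ≤ _ := sum_Icc_choose_mul_factorial_le n m s C hm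
      _ ≤ 2 ^ (s + 1) * (K₂ / (n : ℝ) ^ (s + 1)) := by gcongr; exact hsum n m hn hnm
      _ ≤ _ := by rw [mul_div_assoc']; gcongr; linarith
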